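/- arXiv:1709.09022 — 8 statements merged into one kernel-verified Lean document; each statement's English description precedes it below -/
import Mathlib

section
/- Let A be an m×n real matrix, b ∈ ℝ^m, and x̄_j = min_i (b_i - a_{ij}); define M_j = {i : x̄_j = b_i - a_{ij}}. Then for x ∈ ℝ^n, max_j (a_{ij} + x_j) = b_i for all i if and only if x ≤ x̄ (componentwise) and ⋃_{j : x_j = x̄_j} M_j = {1,...,m}. -/
/-- Max-plus matrix-vector product: `(A ⊗ x)_i = max_j (a_{ij} + x_j)`. -/
noncomputable def mpMul {m n : ℕ} [NeZero n] (A : Fin m → Fin n → ℝ) (x : Fin n → ℝ)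
    (i : Fin m) : ℝ :=
  Finset.univ.sup' Finset.univ_nonempty (fun j => A i j + x j)

/-! `x̄` is the greatest subsolution: `A ⊗ x ≤ b` iff `x ≤ x̄`, since both say `a_{ij} + x_j ≤ b_i`
for all `i, j`. For such `x`, `(A ⊗ x)_i = b_i` iff some `j` attains `a_{ij} + x_j = b_i`, and in the
chain `x_j ≤ x̄_j ≤ b_i - a_{ij}` this means exactly `x_j = x̄_j` and `i ∈ M_j`. -/

section mpMul

variable {m n : ℕ} [NeZero n] (A : Fin m → Fin n → ℝ)

theorem mpMul_le_iff {x : Fin n → ℝ} {i : Fin m} {c : ℝ} :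
    mpMul A x i ≤ c ↔ ∀ j, A i j + x j ≤ c := by
  simp [mpMul, Finset.sup'_le_iff]

theorem add_le_mpMul (x : Fin n → ℝ) (i : Fin m) (j : Fin n) : A i j + x j ≤ mpMul A x i :=
  Finset.le_sup' (fun j => A i j + x j) (Finset.mem_univ j)

theorem exists_add_eq_mpMul (x : Fin n → ℝ) (i : Fin m) : ∃ j, A i j + x j = mpMul A x i := by
  obtain ⟨j, -, hj⟩ := Finset.exists_mem_eq_sup' Finset.univ_nonempty (fun j => A i j + x j)
  exact ⟨j, hj.symm⟩

theorem mpMul_eq_iff_exists_add_eq {x : Fin n → ℝ} {i : Fin m} {c : ℝ} (hle : mpMul A x i ≤ c) :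
    mpMul A x i = c ↔ ∃ j, A i j + x j = c := by
  constructor
  · rintro rfl
    exact exists_add_eq_mpMul A x i
  · rintro ⟨j, hj⟩
    exact le_antisymm hle (hj ▸ add_le_mpMul A x i j)

end mpMul

section mpPrincipal

variable {m n : ℕ} [NeZero m] (A : Fin m → Fin n → ℝ)

noncomputable def mpPrincipal (b : Fin m → ℝ) (j : Fin n) : ℝ :=
  Finset.univ.inf' Finset.univ_nonempty (fun i => b i - A i j)

theorem mpPrincipal_le_sub (b : Fin m → ℝ) (i : Fin m) (j : Fin n) :
    mpPrincipal A b j ≤ b i - A i j :=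
  Finset.inf'_le _ (Finset.mem_univ i)

variable {A}

theorem le_mpPrincipal_iff {b : Fin m → ℝ} {x : Fin n → ℝ} {j : Fin n} :
    x j ≤ mpPrincipal A b j ↔ ∀ i, A i j + x j ≤ b i := by
  simp only [mpPrincipal, Finset.le_inf'_iff, Finset.mem_univ, true_implies, le_sub_iff_add_le']

theorem mpMul_le_iff_le_mpPrincipal [NeZero n] {b : Fin m → ℝ} {x : Fin n → ℝ} :
    (∀ i, mpMul A x i ≤ b i) ↔ ∀ j, x j ≤ mpPrincipal A b j := by
  simp only [mpMul_le_iff, le_mpPrincipal_iff]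
  exact forall_comm

theorem add_eq_iff_of_le_mpPrincipal {b : Fin m → ℝ} {x : Fin n → ℝ} {i : Fin m} {j : Fin n}
    (hx : x j ≤ mpPrincipal A b j) :
    A i j + x j = b i ↔ x j = mpPrincipal A b j ∧ mpPrincipal A b j = b i - A i j := by
  have := mpPrincipal_le_sub A b i j
  constructor
  · intro h
    constructor <;> linarith
  · rintro ⟨h₁, h₂⟩
    linarith

end mpPrincipal

theorem mpMul_eq_iff {m n : ℕ} [NeZero m] [NeZero n]
    (A : Fin m → Fin n → ℝ) (b : Fin m → ℝ) (x : Fin n → ℝ) (xbar : Fin n → ℝ)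
    (hxbar : ∀ j, xbar j = Finset.univ.inf' Finset.univ_nonempty (fun i => b i - A i j))
    (M : Fin n → Set (Fin m)) (hM : ∀ j, M j = {i | xbar j = b i - A i j}) :
    (∀ i, mpMul A x i = b i) ↔
      ((∀ j, x j ≤ xbar j) ∧ (⋃ j ∈ {j : Fin n | x j = xbar j}, M j) = Set.univ) := by
  obtain rfl : xbar = mpPrincipal A b := funext hxbar
  obtain rfl : M = fun j => {i | mpPrincipal A b j = b i - A i j} := funext hM
  simp only [Set.eq_univ_iff_forall, Set.mem_iUnion, Set.mem_ofPred_eq, exists_prop]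
  constructor
  · intro h
    have hx := mpMul_le_iff_le_mpPrincipal.1 fun i => (h i).le
    refine ⟨hx, fun i => ?_⟩
    obtain ⟨j, hj⟩ := (mpMul_eq_iff_exists_add_eq A (h i).le).1 (h i)
    exact ⟨j, (add_eq_iff_of_le_mpPrincipal (hx j)).1 hj⟩
  · rintro ⟨hx, hcover⟩ i
    obtain ⟨j, hj⟩ := hcover i
    have hle := mpMul_le_iff_le_mpPrincipal.2 hx i
    exact (mpMul_eq_iff_exists_add_eq A hle).2 ⟨j, (add_eq_iff_of_le_mpPrincipal (hx j)).2 hj⟩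
end

section
/- Let A be an m×n real matrix, b ∈ ℝ^m, and x̄_j = min_i (b_i - a_{ij}). The system Ax = b (with Ax defined by (Ax)_i = max_j (a_{ij} + x_j)) has a solution x ∈ ℝ^n if and only if A x̄ = b. -/
/-- The paper's `A^# b`. -/
noncomputable def mpResidual {m n : ℕ} [NeZero m] (A : Fin m → Fin n → ℝ) (b : Fin m → ℝ)
    (j : Fin n) : ℝ :=
  Finset.univ.inf' Finset.univ_nonempty (fun i => b i - A i j)

theorem mpMul_galoisConnection {m n : ℕ} [NeZero m] [NeZero n] (A : Fin m → Fin n → ℝ) :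
    GaloisConnection (mpMul A) (mpResidual A) := by
  intro x b
  simp only [Pi.le_def, mpMul, mpResidual, Finset.sup'_le_iff, Finset.le_inf'_iff,
    Finset.mem_univ, forall_const, le_sub_iff_add_le']
  exact forall_comm

theorem mpMul_solvable_iff {m n : ℕ} [NeZero m] [NeZero n]
    (A : Fin m → Fin n → ℝ) (b : Fin m → ℝ) (xbar : Fin n → ℝ)
    (hxbar : ∀ j, xbar j = Finset.univ.inf' Finset.univ_nonempty (fun i => b i - A i j)) :
    (∃ x : Fin n → ℝ, ∀ i, mpMul A x i = b i) ↔ (∀ i, mpMul A xbar i = b i) := by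
  have gc := mpMul_galoisConnection A
  obtain rfl : xbar = mpResidual A b := funext hxbar
  refine ⟨fun ⟨x, hx⟩ => ?_, fun h => ⟨_, h⟩⟩
  obtain rfl : mpMul A x = b := funext hx
  exact congrFun (le_antisymm (gc.l_u_le _) (gc.monotone_l (gc.le_u_l x)))
end

section
/- Let A be an m×n real matrix, b ∈ ℝ^m, d ∈ ℝ^n, and x̄_j = min_i (b_i - a_{ij}). There exists x ∈ ℝ^n with Ax = b and x ≤ d if and only if A z = b, where z_j = min(d_j, x̄_j). -/
/-
`x̄` is the greatest subsolution of `A ⊗ x ≤ b`: by residuation, `A ⊗ x ≤ b` holds exactly when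
`x ≤ x̄`. Any solution `x ≤ d` of `A ⊗ x = b` therefore lies below `z = min d x̄`, and since
`z` is still a subsolution, monotonicity of `A ⊗ ·` squeezes `A ⊗ z` between `A ⊗ x = b` and `b`.
-/

section MaxPlus

variable {m n : ℕ} [NeZero n] (A : Fin m → Fin n → ℝ)

theorem mpMul_mono {x y : Fin n → ℝ} (hxy : ∀ j, x j ≤ y j) (i : Fin m) :
    mpMul A x i ≤ mpMul A y i :=
  Finset.sup'_mono_fun fun j _ => add_le_add_right (hxy j) _

theorem mpMul_le_iff_le_inf' [NeZero m] (b : Fin m → ℝ) (x : Fin n → ℝ) :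
    (∀ i, mpMul A x i ≤ b i) ↔
      ∀ j, x j ≤ Finset.univ.inf' Finset.univ_nonempty (fun i => b i - A i j) := by
  simp only [mpMul, Finset.sup'_le_iff, Finset.le_inf'_iff, Finset.mem_univ, true_implies,
    le_sub_iff_add_le']
  exact forall_comm

end MaxPlus

theorem mpMul_solvable_below_iff {m n : ℕ} [NeZero m] [NeZero n]
    (A : Fin m → Fin n → ℝ) (b : Fin m → ℝ) (d : Fin n → ℝ) (xbar : Fin n → ℝ)
    (hxbar : ∀ j, xbar j = Finset.univ.inf' Finset.univ_nonempty (fun i => b i - A i j))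
    (z : Fin n → ℝ) (hz : ∀ j, z j = min (d j) (xbar j)) :
    (∃ x : Fin n → ℝ, (∀ i, mpMul A x i = b i) ∧ ∀ j, x j ≤ d j) ↔
      (∀ i, mpMul A z i = b i) := by
  have hprincipal : ∀ x, (∀ i, mpMul A x i ≤ b i) ↔ ∀ j, x j ≤ xbar j := by
    simpa only [← hxbar] using mpMul_le_iff_le_inf' A b
  have hz_sub : ∀ i, mpMul A z i ≤ b i :=
    (hprincipal z).2 fun j => (hz j).trans_le (min_le_right _ _)
  constructor
  · rintro ⟨x, hx, hxd⟩ i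
    have hx_le_xbar := (hprincipal x).1 fun i => (hx i).le
    have hxz : ∀ j, x j ≤ z j := fun j => (hz j).symm ▸ le_min (hxd j) (hx_le_xbar j)
    exact le_antisymm (hz_sub i) (hx i ▸ mpMul_mono A hxz i)
  · exact fun h => ⟨z, h, fun j => (hz j).trans_le (min_le_left _ _)⟩
end

section
/- For any m×n real matrix A and b ∈ ℝ^m, the solution set S = {x ∈ ℝ^n : Ax = b} is max-convex: if x, y ∈ S and λ, μ ∈ ℝ with max(λ, μ) = 0, then the vector with components max(λ + x_j, μ + y_j) lies in S. -/
/-! Max-plus matrix multiplication commutes with pointwise `max` and with adding a scalar to every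
coordinate, so `A ⊗ (λ ⊗ x ⊕ μ ⊗ y) = λ ⊗ (A ⊗ x) ⊕ μ ⊗ (A ⊗ y) = max (λ, μ) + b = b`. -/

theorem Finset.sup'_sup {ι α : Type*} [SemilatticeSup α] (s : Finset ι) (hs : s.Nonempty)
    (f g : ι → α) : s.sup' hs (fun i => f i ⊔ g i) = s.sup' hs f ⊔ s.sup' hs g :=
  le_antisymm
    (sup'_le _ _ fun _ hi => sup_le_sup (le_sup' f hi) (le_sup' g hi))
    (sup_le (sup'_le _ _ fun _ hi => le_sup'_of_le _ hi le_sup_left)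
      (sup'_le _ _ fun _ hi => le_sup'_of_le _ hi le_sup_right))

section MaxPlus

variable {m n : ℕ} [NeZero n] (A : Fin m → Fin n → ℝ)

theorem mpMul_max (x y : Fin n → ℝ) (i : Fin m) :
    mpMul A (fun j => max (x j) (y j)) i = max (mpMul A x i) (mpMul A y i) := by
  simp only [mpMul, add_max]
  exact Finset.sup'_sup _ _ _ _

theorem mpMul_const_add (c : ℝ) (x : Fin n → ℝ) (i : Fin m) :
    mpMul A (fun j => c + x j) i = c + mpMul A x i := by
  simp only [mpMul, Finset.add_sup', add_left_comm]

end MaxPlus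

theorem mpMul_solutionSet_maxConvex {m n : ℕ} [NeZero n]
    (A : Fin m → Fin n → ℝ) (b : Fin m → ℝ)
    (x y : Fin n → ℝ) (hx : ∀ i, mpMul A x i = b i) (hy : ∀ i, mpMul A y i = b i)
    (lam mu : ℝ) (hlm : max lam mu = 0) :
    ∀ i, mpMul A (fun j => max (lam + x j) (mu + y j)) i = b i := by
  intro i
  rw [mpMul_max, mpMul_const_add, mpMul_const_add, hx, hy, max_add_add_right, hlm, zero_add]
end

section
/- Let S ⊆ ℝ^n be max-convex and f(x) = max_j (c_j + x_j) for fixed c ∈ ℝ^n. If x, y ∈ S with f(x) ≤ f(y), then for every value v ∈ [f(x), f(y)] there exists z ∈ S with f(z) = v. -/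
/-- A set `S ⊆ ℝⁿ` is max-convex if `λ⊗x ⊕ μ⊗y ∈ S` whenever `x, y ∈ S` and `max(λ,μ) = 0`. -/
def MaxConvex {n : ℕ} (S : Set (Fin n → ℝ)) : Prop :=
  ∀ x ∈ S, ∀ y ∈ S, ∀ lam mu : ℝ, max lam mu = 0 →
    (fun j => max (lam + x j) (mu + y j)) ∈ S

/-!
A max-linear functional is a tropical linear map:
`f (λ⊗x ⊕ μ⊗y) = max (λ + f x) (μ + f y)`. Taking `λ = 0` and `μ = v - f y ≤ 0`
gives a point of `S` on which `f` takes the value `max (f x) v = v`.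
-/

namespace Finset

variable {ι α : Type*} {s : Finset ι}

theorem sup'_sup_distrib [SemilatticeSup α] (hs : s.Nonempty) (f g : ι → α) :
    s.sup' hs (fun i => f i ⊔ g i) = s.sup' hs f ⊔ s.sup' hs g :=
  le_antisymm
    (sup'_le _ _ fun _ hi => sup_le_sup (le_sup' f hi) (le_sup' g hi))
    (sup_le (sup'_mono_fun fun _ _ => le_sup_left) (sup'_mono_fun fun _ _ => le_sup_right))

theorem sup'_add_max_add [AddCommGroup α] [LinearOrder α] [IsOrderedAddMonoid α]
    (hs : s.Nonempty) (c x y : ι → α) (a b : α) :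
    s.sup' hs (fun i => c i + max (a + x i) (b + y i)) =
      max (a + s.sup' hs (fun i => c i + x i)) (b + s.sup' hs (fun i => c i + y i)) := by
  simp only [add_sup', ← sup'_sup_distrib, add_max, add_left_comm (c _)]

end Finset

theorem maxConvex_intermediate_value_general {n : ℕ} [NeZero n]
    (S : Set (Fin n → ℝ)) (hS : MaxConvex S) (c : Fin n → ℝ)
    (f : (Fin n → ℝ) → ℝ)
    (hf : ∀ x, f x = Finset.univ.sup' Finset.univ_nonempty (fun j => c j + x j))
    (x y : Fin n → ℝ) (hx : x ∈ S) (hy : y ∈ S) :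
    ∀ v ∈ Set.Icc (f x) (f y), ∃ z ∈ S, f z = v := by
  rintro v ⟨hxv, hvy⟩
  have hmax : max 0 (v - f y) = 0 := max_eq_left (by linarith)
  refine ⟨fun j => max (0 + x j) (v - f y + y j), hS x hx y hy 0 (v - f y) hmax, ?_⟩
  rw [hf, Finset.sup'_add_max_add, ← hf, ← hf, zero_add, sub_add_cancel]
  exact max_eq_right hxv

theorem maxConvex_intermediate_value {n : ℕ} [NeZero n]
    (S : Set (Fin n → ℝ)) (hS : MaxConvex S) (c : Fin n → ℝ)
    (f : (Fin n → ℝ) → ℝ)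
    (hf : ∀ x, f x = Finset.univ.sup' Finset.univ_nonempty (fun j => c j + x j))
    (x y : Fin n → ℝ) (hx : x ∈ S) (hy : y ∈ S) (hxy : f x ≤ f y) :
    ∀ v ∈ Set.Icc (f x) (f y), ∃ z ∈ S, f z = v :=
  maxConvex_intermediate_value_general S hS c f hf x y hx hy
end

section
/- Let a, c ∈ ℝ^n, b ∈ ℝ, f(x) = max_j (c_j + x_j), and S = {x ∈ ℝ^n : max_j (a_j + x_j) = b}. Then the image set F = {f(x) : x ∈ S} is a nonempty closed interval; in particular F attains both its maximum (at x̄ with x̄_j = b - a_j) and its minimum. -/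
/-!
A vector `x` solves `max_j (a j + x j) = b` exactly when it lies below the principal solution
`x̄ j = b - a j` and touches it in some coordinate `k`. Monotonicity of `f` then confines `f x` to
`[c k + x̄ k, f x̄] ⊆ [min_j (c j + x̄ j), f x̄]`. Conversely, for `v` in that interval the vector
`x̄ ⊓ (v - c)` touches `x̄` at a minimizing coordinate and `v - c` at a maximizing one, so it solves
both `max_j (a j + x j) = b` and `f x = v`.
-/

section MaxPlus

variable {ι α : Type*} [Fintype ι] [Nonempty ι]

section Add

variable [Add α] [LinearOrder α]

def maxPlus (a x : ι → α) : α :=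
  Finset.univ.sup' Finset.univ_nonempty fun j => a j + x j

theorem le_maxPlus (a x : ι → α) (j : ι) : a j + x j ≤ maxPlus a x :=
  Finset.le_sup' (fun j => a j + x j) (Finset.mem_univ j)

theorem maxPlus_le_iff {a x : ι → α} {v : α} : maxPlus a x ≤ v ↔ ∀ j, a j + x j ≤ v := by
  simp [maxPlus, Finset.sup'_le_iff]

theorem exists_add_eq_maxPlus (a x : ι → α) : ∃ j, a j + x j = maxPlus a x := by
  obtain ⟨j, -, hj⟩ := Finset.exists_mem_eq_sup' Finset.univ_nonempty fun j => a j + x j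
  exact ⟨j, hj.symm⟩

end Add

variable [AddCommGroup α] [LinearOrder α] [IsOrderedAddMonoid α]

theorem maxPlus_mono (a : ι → α) {x y : ι → α} (hxy : x ≤ y) : maxPlus a x ≤ maxPlus a y :=
  maxPlus_le_iff.2 fun j => (add_le_add_right (hxy j) (a j)).trans (le_maxPlus a y j)

theorem maxPlus_eq_iff {a x : ι → α} {b : α} :
    maxPlus a x = b ↔ (∀ j, x j ≤ b - a j) ∧ ∃ j, x j = b - a j := by
  simp only [le_sub_iff_add_le', eq_sub_iff_add_eq']
  constructor
  · rintro rfl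
    exact ⟨le_maxPlus a x, exists_add_eq_maxPlus a x⟩
  · rintro ⟨hle, j, hj⟩
    exact le_antisymm (maxPlus_le_iff.2 hle) (hj ▸ le_maxPlus a x j)

theorem maxPlus_sub_eq (a : ι → α) (b : α) : maxPlus a (fun j => b - a j) = b :=
  maxPlus_eq_iff.2 ⟨fun _ => le_rfl, Classical.arbitrary ι, rfl⟩

theorem maxPlus_inf_eq {a y : ι → α} {b : α} (h : ∃ k, b - a k ≤ y k) :
    maxPlus a ((fun j => b - a j) ⊓ y) = b :=
  let ⟨k, hk⟩ := h
  maxPlus_eq_iff.2 ⟨fun _ => inf_le_left, k, inf_eq_left.2 hk⟩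

theorem maxPlus_image_eq_Icc (a c : ι → α) (b : α) :
    maxPlus c '' {x | maxPlus a x = b} =
      Set.Icc (Finset.univ.inf' Finset.univ_nonempty fun j => c j + (b - a j))
        (maxPlus c fun j => b - a j) := by
  ext v
  constructor
  · rintro ⟨x, hx, rfl⟩
    obtain ⟨hle, k, hk⟩ := maxPlus_eq_iff.1 hx
    refine ⟨?_, maxPlus_mono c hle⟩
    calc Finset.univ.inf' Finset.univ_nonempty (fun j => c j + (b - a j))
        ≤ c k + (b - a k) := Finset.inf'_le _ (Finset.mem_univ k)
      _ = c k + x k := by rw [hk]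
      _ ≤ maxPlus c x := le_maxPlus c x k
  · rintro ⟨hpv, hvq⟩
    obtain ⟨k, -, hk⟩ := (Finset.inf'_le_iff _).1 hpv
    obtain ⟨l, -, hl⟩ := (Finset.le_sup'_iff _).1 hvq
    refine ⟨(fun j => b - a j) ⊓ fun j => v - c j, maxPlus_inf_eq ⟨k, ?_⟩, ?_⟩
    · exact le_sub_iff_add_le'.2 hk
    · rw [inf_comm]
      exact maxPlus_inf_eq ⟨l, sub_le_iff_le_add'.2 hl⟩

end MaxPlus

theorem maxLinear_image_of_hyperplane_is_Icc {n : ℕ} [NeZero n]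
    (a c : Fin n → ℝ) (b : ℝ)
    (f : (Fin n → ℝ) → ℝ)
    (hf : ∀ x, f x = Finset.univ.sup' Finset.univ_nonempty (fun j => c j + x j))
    (S : Set (Fin n → ℝ))
    (hS : S = {x | Finset.univ.sup' Finset.univ_nonempty (fun j => a j + x j) = b})
    (xbar : Fin n → ℝ) (hxbar : ∀ j, xbar j = b - a j) :
    ∃ p q : ℝ, p ≤ q ∧ {v | ∃ x ∈ S, f x = v} = Set.Icc p q ∧
      xbar ∈ S ∧ f xbar = q ∧ ∃ x ∈ S, f x = p := by
  obtain rfl : f = maxPlus c := funext hf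
  obtain rfl : S = {x | maxPlus a x = b} := hS
  obtain rfl : xbar = fun j => b - a j := funext hxbar
  have himage := maxPlus_image_eq_Icc a c b
  have hpq := (Finset.inf'_le (fun j => c j + (b - a j)) (Finset.mem_univ 0)).trans (le_maxPlus c (fun j => b - a j) 0)
  exact ⟨_, _, hpq, himage, maxPlus_sub_eq a b, rfl, himage.symm.subset (Set.left_mem_Icc.2 hpq)⟩
end

section
/- Let A be a 2×n real matrix with α̲ = min_j (a_{2j} - a_{1j}) and ᾱ = max_j (a_{2j} - a_{1j}). Then there exists x ∈ ℝ^n with Ax ∈ ℤ² if and only if the interval [α̲, ᾱ] contains an integer. -/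
/-!
The difference of the two coordinates of `A ⊗ x` always lies in `[α̲, ᾱ]`: if row `0` attains its
maximum at `j`, then `(A ⊗ x)₁ - (A ⊗ x)₀ ≥ a₁ⱼ - a₀ⱼ ≥ α̲`, and symmetrically for `ᾱ`. So an integer
image forces the integer `(A ⊗ x)₁ - (A ⊗ x)₀` into `[α̲, ᾱ]`. Conversely, for `t ∈ [α̲, ᾱ]` the
vector `xⱼ = min (-a₀ⱼ) (t - a₁ⱼ)` has image `(0, t)`: `a₀ⱼ + xⱼ ≤ 0` with equality wherever
`a₁ⱼ - a₀ⱼ ≤ t`, and `a₁ⱼ + xⱼ ≤ t` with equality wherever `a₁ⱼ - a₀ⱼ ≥ t`.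
-/

namespace Finset

variable {ι α : Type*} [AddCommGroup α] [LinearOrder α] [IsOrderedAddMonoid α]
  {s : Finset ι} (hs : s.Nonempty) (f g : ι → α)

theorem inf'_sub_le_sup'_sub_sup' :
    s.inf' hs (fun j => g j - f j) ≤ s.sup' hs g - s.sup' hs f := by
  obtain ⟨j, hj, hfj⟩ := s.exists_mem_eq_sup' hs f
  rw [hfj]
  exact inf'_le_of_le _ hj (sub_le_sub_right (le_sup' g hj) _)

theorem sup'_sub_sup'_le_sup'_sub :
    s.sup' hs g - s.sup' hs f ≤ s.sup' hs (fun j => g j - f j) := by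
  obtain ⟨j, hj, hgj⟩ := s.exists_mem_eq_sup' hs g
  rw [hgj]
  exact le_sup'_of_le _ hj (sub_le_sub_left (le_sup' f hj) _)

variable {f g} {t : α}

theorem sup'_add_min_neg_sub_eq_zero (ht : s.inf' hs (fun j => g j - f j) ≤ t) :
    s.sup' hs (fun j => f j + min (-f j) (t - g j)) = 0 := by
  obtain ⟨j, hj, hjt⟩ := (inf'_le_iff hs).1 ht
  refine le_antisymm (sup'_le hs _ fun i _ => ?_) (le_sup'_of_le _ hj ?_)
  · exact (add_le_add_right (min_le_left (-f i) (t - g i)) (f i)).trans_eq (add_neg_cancel _)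
  · rw [min_eq_left (le_sub_iff_add_le.2 ((neg_add_eq_sub _ _).trans_le hjt)), add_neg_cancel]

theorem sup'_add_min_neg_sub_eq (ht : t ≤ s.sup' hs (fun j => g j - f j)) :
    s.sup' hs (fun j => g j + min (-f j) (t - g j)) = t := by
  obtain ⟨j, hj, hjt⟩ := (le_sup'_iff hs).1 ht
  refine le_antisymm (sup'_le hs _ fun i _ => ?_) (le_sup'_of_le _ hj ?_)
  · exact (add_le_add_right (min_le_right (-f i) (t - g i)) (g i)).trans_eq (add_sub_cancel _ _)
  · rw [min_eq_right (sub_le_iff_le_add.2 (hjt.trans_eq (neg_add_eq_sub _ _).symm)),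
      add_sub_cancel]

end Finset

section MaxPlus

variable {m n : ℕ} [NeZero n] (A : Fin m → Fin n → ℝ) (i i' : Fin m)

theorem mpMul_sub_mpMul_mem_Icc (x : Fin n → ℝ) :
    mpMul A x i' - mpMul A x i ∈
      Set.Icc (Finset.univ.inf' Finset.univ_nonempty (fun j => A i' j - A i j))
        (Finset.univ.sup' Finset.univ_nonempty (fun j => A i' j - A i j)) := by
  have hcancel : (fun j => A i' j - A i j) = fun j => (A i' j + x j) - (A i j + x j) := by
    ext j
    ring
  rw [hcancel]
  exact ⟨Finset.inf'_sub_le_sup'_sub_sup' _ _ _, Finset.sup'_sub_sup'_le_sup'_sub _ _ _⟩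

theorem exists_mpMul_eq_zero_and_eq {t : ℝ}
    (ht : t ∈ Set.Icc (Finset.univ.inf' Finset.univ_nonempty (fun j => A i' j - A i j))
      (Finset.univ.sup' Finset.univ_nonempty (fun j => A i' j - A i j))) :
    ∃ x : Fin n → ℝ, mpMul A x i = 0 ∧ mpMul A x i' = t :=
  ⟨fun j => min (-A i j) (t - A i' j),
    Finset.sup'_add_min_neg_sub_eq_zero _ ht.1, Finset.sup'_add_min_neg_sub_eq _ ht.2⟩

end MaxPlus

theorem integer_image_of_two_row_matrix_iff {n : ℕ} [NeZero n]
    (A : Fin 2 → Fin n → ℝ)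
    (alow ahigh : ℝ)
    (hlow : alow = Finset.univ.inf' Finset.univ_nonempty (fun j => A 1 j - A 0 j))
    (hhigh : ahigh = Finset.univ.sup' Finset.univ_nonempty (fun j => A 1 j - A 0 j)) :
    (∃ x : Fin n → ℝ, ∀ i, ∃ k : ℤ, mpMul A x i = k) ↔
      ∃ k : ℤ, alow ≤ (k : ℝ) ∧ (k : ℝ) ≤ ahigh := by
  subst hlow hhigh
  constructor
  · rintro ⟨x, hx⟩
    obtain ⟨k₀, hk₀⟩ := hx 0
    obtain ⟨k₁, hk₁⟩ := hx 1
    have hdiff := mpMul_sub_mpMul_mem_Icc A 0 1 x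
    rw [hk₀, hk₁] at hdiff
    exact ⟨k₁ - k₀, by exact_mod_cast hdiff⟩
  · rintro ⟨k, hk⟩
    obtain ⟨x, hx₀, hx₁⟩ := exists_mpMul_eq_zero_and_eq A 0 1 hk
    exact ⟨x, Fin.forall_fin_two.2 ⟨⟨0, by simp [hx₀]⟩, ⟨k, hx₁⟩⟩⟩
end

section
/- Let A be a 3×n real matrix that is column typical (no two entries in any column have equal fractional part) with third row identically zero, and suppose x ∈ ℝ^n satisfies Ax ∈ ℤ³ and (Ax)₃ = 0 with x_k = 0 ≥ x_j for all j, where k attains the max in row 3. Let Ā be the 2×n matrix of the first two rows of A, B^(k) the matrix Ā with column k removed, and z the vector x with component k removed. Then B^(k) z ∈ ℤ², B^(k) z ≥ Ā_k (the k-th column of Ā), and z ≤ 0. -/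
theorem Finset.sup'_univ_eq_sup_sup'_erase {α β : Type*} [Fintype β] [DecidableEq β]
    [SemilatticeSup α] (f : β → α) (k : β) (hne : (univ.erase k).Nonempty) :
    univ.sup' ⟨k, mem_univ k⟩ f = f k ⊔ (univ.erase k).sup' hne f := by
  rw [← sup'_insert]
  exact sup'_congr _ (insert_erase (mem_univ k)).symm fun _ _ => rfl

theorem isInt_and_le_of_sup_eq_intCast {a b : ℝ} {m : ℤ} (ha : Int.fract a ≠ 0)
    (h : a ⊔ b = m) : (∃ m' : ℤ, b = m') ∧ a ≤ b := by
  rcases le_total a b with hab | hba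
  · exact ⟨⟨m, by rwa [sup_eq_right.mpr hab] at h⟩, hab⟩
  · rw [sup_eq_left.mpr hba] at h
    exact absurd (by rw [h, Int.fract_intCast]) ha

theorem fract_castSucc_ne_zero_of_column_typical {n : ℕ} {A : Fin 3 → Fin n → ℝ}
    (htyp : ∀ j, ∀ i i' : Fin 3, i ≠ i' → Int.fract (A i j) ≠ Int.fract (A i' j))
    (hrow3 : ∀ j, A 2 j = 0) (i : Fin 2) (j : Fin n) : Int.fract (A i.castSucc j) ≠ 0 := by
  have hi : (i.castSucc : Fin 3) ≠ 2 := by fin_cases i <;> decide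
  simpa [hrow3 j] using htyp j i.castSucc 2 hi

theorem reduction_for_column_typical_general {n : ℕ} [NeZero n]
    (A : Fin 3 → Fin n → ℝ)
    (htyp : ∀ j, ∀ i i' : Fin 3, i ≠ i' → Int.fract (A i j) ≠ Int.fract (A i' j))
    (hrow3 : ∀ j, A 2 j = 0)
    (x : Fin n → ℝ)
    (hint : ∀ i, ∃ kk : ℤ, mpMul A x i = kk)
    (k : Fin n) (hk : x k = 0) (hxle : ∀ j, x j ≤ 0)
    (hne : (Finset.univ.erase k).Nonempty) :
    (∀ i : Fin 2, ∃ kk : ℤ,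
        (Finset.univ.erase k).sup' hne (fun j => A i.castSucc j + x j) = kk) ∧
    (∀ i : Fin 2,
        A i.castSucc k ≤ (Finset.univ.erase k).sup' hne (fun j => A i.castSucc j + x j)) ∧
    (∀ j ∈ Finset.univ.erase k, x j ≤ 0) := by
  have hrow (i : Fin 2) : (∃ kk : ℤ, (Finset.univ.erase k).sup' hne
      (fun j => A i.castSucc j + x j) = kk) ∧
      A i.castSucc k ≤ (Finset.univ.erase k).sup' hne (fun j => A i.castSucc j + x j) := by
    obtain ⟨m, hm⟩ := hint i.castSucc
    rw [mpMul, Finset.sup'_univ_eq_sup_sup'_erase _ k hne, hk, add_zero] at hm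
    exact isInt_and_le_of_sup_eq_intCast
      (fract_castSucc_ne_zero_of_column_typical htyp hrow3 i k) hm
  exact ⟨fun i => (hrow i).1, fun i => (hrow i).2, fun j _ => hxle j⟩

theorem reduction_for_column_typical {n : ℕ} [NeZero n] (hn : 2 ≤ n)
    (A : Fin 3 → Fin n → ℝ)
    (htyp : ∀ j, ∀ i i' : Fin 3, i ≠ i' → Int.fract (A i j) ≠ Int.fract (A i' j))
    (hrow3 : ∀ j, A 2 j = 0)
    (x : Fin n → ℝ)
    (hint : ∀ i, ∃ kk : ℤ, mpMul A x i = kk)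
    (hx3 : mpMul A x 2 = 0)
    (k : Fin n) (hk : x k = 0) (hxle : ∀ j, x j ≤ 0)
    (hne : (Finset.univ.erase k).Nonempty) :
    (∀ i : Fin 2, ∃ kk : ℤ,
        (Finset.univ.erase k).sup' hne (fun j => A i.castSucc j + x j) = kk) ∧
    (∀ i : Fin 2,
        A i.castSucc k ≤ (Finset.univ.erase k).sup' hne (fun j => A i.castSucc j + x j)) ∧
    (∀ j ∈ Finset.univ.erase k, x j ≤ 0) :=
  reduction_for_column_typical_general A htyp hrow3 x hint k hk hxle hne
end
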